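/- Let p_i ≥ 0 with ∑_i p_i = 1, q_i = (1−p_i)^n, and θ_i = q_i φ(t p_i q_i) + (1−q_i) φ(t p_i (1−q_i)) with φ(x) = (e^x − 1 − x)/x^2. Then for t > 0, 2∑_i θ_i p_i^2 q_i (1−q_i) ≤ 2 t^{−2} ∑_{r≥2} (t/n)^r · E[K_r(n)], where E[K_r(n)] = ∑_i e^{−n p_i} (n p_i)^r / r!. -/

import Mathlib

/-!
Both sides split over the atoms `i`. On the right, `(t/n)^r (n p)^r = (t p)^r`, so the sum over
`r ≥ 2` is the tail `exp (t p) - 1 - t p = (t p)^2 φ(t p)` of the exponential series, weighted by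
`exp (-n p)`. On the left, `φ(x) = ∑_k x^k/(k+2)!` is nondecreasing on `[0, ∞)`, so the convex
combination `θ_i` is at most `φ(t p_i)`, and `q (1 - q) ≤ q = (1 - p)^n ≤ exp (-n p)`.
-/

noncomputable def phi (x : ℝ) : ℝ :=
  if x = 0 then 1 / 2 else (Real.exp x - 1 - x) / x ^ 2

open Finset Real Nat

lemma hasSum_pow_div_factorial_add_two (x : ℝ) :
    HasSum (fun k : ℕ => x ^ (k + 2) / (k + 2)!) (exp x - 1 - x) := by
  have h := (hasSum_nat_add_iff' 2).mpr (NormedSpace.expSeries_div_hasSum_exp x)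
  simpa [sum_range_succ, ← Real.exp_eq_exp_ℝ, sub_sub] using h

lemma hasSum_phi (x : ℝ) : HasSum (fun k : ℕ => x ^ k / (k + 2)!) (phi x) := by
  by_cases hx : x = 0
  · subst hx
    convert hasSum_single (f := fun k : ℕ => (0 : ℝ) ^ k / (k + 2)!) 0 fun k hk => ?_ using 1
    · norm_num [phi]
    · simp [hk]
  · rw [phi, if_neg hx]
    refine ((hasSum_pow_div_factorial_add_two x).div_const (x ^ 2)).congr_fun fun k => ?_
    rw [pow_add]
    field_simp

lemma exp_sub_one_sub_eq_sq_mul_phi (x : ℝ) : exp x - 1 - x = x ^ 2 * phi x := by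
  by_cases hx : x = 0
  · simp [hx]
  · rw [phi, if_neg hx]
    field_simp

lemma phi_nonneg {x : ℝ} (hx : 0 ≤ x) : 0 ≤ phi x :=
  (hasSum_phi x).nonneg fun k => by positivity

lemma monotoneOn_phi : MonotoneOn phi (Set.Ici 0) := fun a ha _ _ hab =>
  hasSum_le (fun k => by gcongr) (hasSum_phi a) (hasSum_phi _)

lemma MonotoneOn.mul_add_one_sub_mul_le {f : ℝ → ℝ} (hf : MonotoneOn f (Set.Ici 0))
    {x q : ℝ} (hx : 0 ≤ x) (hq0 : 0 ≤ q) (hq1 : q ≤ 1) :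
    q * f (x * q) + (1 - q) * f (x * (1 - q)) ≤ f x := by
  have h1 : f (x * q) ≤ f x :=
    hf (mul_nonneg hx hq0) hx (mul_le_of_le_one_right hx hq1)
  have h2 : f (x * (1 - q)) ≤ f x :=
    hf (mul_nonneg hx (by linarith)) hx (mul_le_of_le_one_right hx (by linarith))
  nlinarith

lemma one_sub_pow_le_exp_neg_mul {p : ℝ} (hp : p ≤ 1) (n : ℕ) :
    (1 - p) ^ n ≤ exp (-n * p) := by
  calc (1 - p) ^ n ≤ exp (-p) ^ n := pow_le_pow_left₀ (by linarith) (one_sub_le_exp_neg p) n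
    _ = exp (-n * p) := by rw [← Real.exp_nat_mul]; ring_nf

lemma hasSum_scaled_poisson_moments {ι : Type*} [Fintype ι] (w x : ι → ℝ) {n : ℕ} (hn : n ≠ 0)
    (t : ℝ) :
    HasSum (fun r : ℕ => (t / n) ^ (r + 2) * ∑ i, w i * (n * x i) ^ (r + 2) / (r + 2)!)
      (∑ i, w i * (exp (t * x i) - 1 - t * x i)) := by
  refine (hasSum_sum fun i _ =>
    (hasSum_pow_div_factorial_add_two (t * x i)).mul_left (w i)).congr_fun fun r => ?_
  rw [mul_sum]
  refine sum_congr rfl fun i _ => ?_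
  have : (n : ℝ) ≠ 0 := by exact_mod_cast hn
  rw [div_pow, mul_pow, mul_pow]
  field_simp

/-- poissonization bound on the variance proxy:
`2∑_i θ_i p_i² q_i (1−q_i) ≤ (2/t²) ∑_{r≥2} (t/n)^r E[K_r(n)]`
where `E[K_r(n)] = ∑_i e^{−n p_i} (n p_i)^r / r!`. -/
theorem poissonization_variance_proxy_bound
    (m : ℕ) (p : Fin m → ℝ) (hp : ∀ i, 0 ≤ p i) (hsum : ∑ i, p i = 1)
    (n : ℕ) (hn : 1 ≤ n) (q : Fin m → ℝ) (hq : ∀ i, q i = (1 - p i) ^ n)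
    (t : ℝ) (ht : 0 < t) (θ : Fin m → ℝ)
    (hθ : ∀ i, θ i = q i * phi (t * p i * q i) + (1 - q i) * phi (t * p i * (1 - q i))) :
    2 * ∑ i, θ i * (p i ^ 2 * q i * (1 - q i)) ≤
      (2 / t ^ 2) * ∑' r : ℕ, (t / n) ^ (r + 2) *
        ∑ i, Real.exp (-(n : ℝ) * p i) * ((n : ℝ) * p i) ^ (r + 2) /
          (Nat.factorial (r + 2) : ℝ) := by
  rw [(hasSum_scaled_poisson_moments _ p (by omega) t).tsum_eq, mul_sum, mul_sum]
  refine sum_le_sum fun i _ => ?_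
  have hp1 : p i ≤ 1 := hsum ▸ single_le_sum (fun j _ => hp j) (mem_univ i)
  have hq0 : 0 ≤ q i := hq i ▸ pow_nonneg (by linarith) n
  have hq1 : q i ≤ 1 := hq i ▸ pow_le_one₀ (by linarith) (by linarith [hp i])
  have hx : 0 ≤ t * p i := mul_nonneg ht.le (hp i)
  have hθle : θ i ≤ phi (t * p i) :=
    hθ i ▸ monotoneOn_phi.mul_add_one_sub_mul_le hx hq0 hq1
  have hqe : q i * (1 - q i) ≤ exp (-n * p i) := by
    nlinarith [hq i ▸ one_sub_pow_le_exp_neg_mul hp1 n]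
  calc 2 * (θ i * (p i ^ 2 * q i * (1 - q i)))
      = 2 * p i ^ 2 * (θ i * (q i * (1 - q i))) := by ring
    _ ≤ 2 * p i ^ 2 * (phi (t * p i) * exp (-n * p i)) := by
      gcongr
      exact phi_nonneg hx
    _ = 2 / t ^ 2 * (exp (-n * p i) * (exp (t * p i) - 1 - t * p i)) := by
      rw [exp_sub_one_sub_eq_sq_mul_phi]
      field_simp
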